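/- Let D ≥ 5 be an integer and let P be a real polynomial in two variables of total degree D. Suppose p = (c,d) and q = (e,f) are distinct points of ℝ² such that all partial derivatives of P of order strictly less than D−2 (including P itself) vanish at both p and q, i.e. p and q are singular points of the curve P = 0 of multiplicity at least D−2. Then the linear polynomial L(u,v) = (d−f)(u−e) − (c−e)(v−f), whose zero set is the line through p and q, satisfies L^{D−4} divides P; equivalently P = L^{D−4}·Q for some polynomial Q of total degree at most 4. -/

import Mathlib

/-!
Restricted to the line through `p` and `q`, a polynomial of degree `< 2m` vanishing to order `m`
at both points has two roots of multiplicity `m`, so it is zero and the line `L` divides it.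
Dividing by `L` lowers the degree by one and the order of vanishing at `p` and `q` by at most one,
so the argument repeats while the degree stays below twice the order: starting from degree `D`
and order `D - 2`, it applies `D - 4` times.
-/

open MvPolynomial

/-- Evaluation of a bivariate polynomial at a point of the plane. -/
noncomputable def pev (F : MvPolynomial (Fin 2) ℝ) (w : ℝ × ℝ) : ℝ :=
  eval ![w.1, w.2] F

/-- First directional quantity `F⁽¹⁾ = (c−u)Fᵤ + (d−v)Fᵥ` at `w = (u,v)`, direction point `p = (c,d)`. -/
noncomputable def d1 (F : MvPolynomial (Fin 2) ℝ) (p w : ℝ × ℝ) : ℝ :=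
  (p.1 - w.1) * pev (pderiv (0 : Fin 2) F) w + (p.2 - w.2) * pev (pderiv (1 : Fin 2) F) w

/-- Second directional quantity `F⁽²⁾` at `w = (u,v)`, direction point `p = (c,d)`. -/
noncomputable def d2 (F : MvPolynomial (Fin 2) ℝ) (p w : ℝ × ℝ) : ℝ :=
  (p.1 - w.1) ^ 2 * pev (pderiv (0 : Fin 2) (pderiv (0 : Fin 2) F)) w
    + 2 * (p.1 - w.1) * (p.2 - w.2) * pev (pderiv (1 : Fin 2) (pderiv (0 : Fin 2) F)) w
    + (p.2 - w.2) ^ 2 * pev (pderiv (1 : Fin 2) (pderiv (1 : Fin 2) F)) w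

/-- `G₁ = F_a·F_b⁽¹⁾ − F_a⁽¹⁾·F_b`. -/
noncomputable def G1 (Fa Fb : MvPolynomial (Fin 2) ℝ) (p w : ℝ × ℝ) : ℝ :=
  pev Fa w * d1 Fb p w - d1 Fa p w * pev Fb w

/-- `G₂ = F_a·F_b⁽²⁾ − F_a⁽²⁾·F_b`. -/
noncomputable def G2 (Fa Fb : MvPolynomial (Fin 2) ℝ) (p w : ℝ × ℝ) : ℝ :=
  pev Fa w * d2 Fb p w - d2 Fa p w * pev Fb w

/-- The defining denominator `2(2−D)G₁ − G₂` of the generalised Manin involution. -/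
noncomputable def den (Fa Fb : MvPolynomial (Fin 2) ℝ) (D : ℕ) (p w : ℝ × ℝ) : ℝ :=
  2 * (2 - (D : ℝ)) * G1 Fa Fb p w - G2 Fa Fb p w

/-- The generalised Manin involution `ι_p(u,v) = (u,v) + z·(p − (u,v))`
with `z = 2G₁ / (2(2−D)G₁ − G₂)`. -/
noncomputable def manin (Fa Fb : MvPolynomial (Fin 2) ℝ) (D : ℕ) (p w : ℝ × ℝ) : ℝ × ℝ :=
  w + (2 * G1 Fa Fb p w / den Fa Fb D p w) • (p - w)

/-- The partial derivative with respect to the `i`-th variable, as a plain function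
(so it can be iterated). -/
noncomputable def pd (i : Fin 2) : MvPolynomial (Fin 2) ℝ → MvPolynomial (Fin 2) ℝ :=
  fun F => pderiv i F

theorem MvPolynomial.pderiv_pderiv_comm {σ R : Type*} [CommRing R] (i j : σ)
    (F : MvPolynomial σ R) : pderiv i (pderiv j F) = pderiv j (pderiv i F) := by
  have h : ⁅pderiv i, pderiv j⁆ = (0 : Derivation R (MvPolynomial σ R) (MvPolynomial σ R)) :=
    derivation_ext fun k => by
      rw [Derivation.commutator_apply]
      classical simp [pderiv_X, Pi.single_apply, apply_ite]
  have := congr($h F)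
  rw [Derivation.commutator_apply] at this
  simpa [sub_eq_zero] using this

theorem MvPolynomial.pderiv_iterate_C_mul {σ R : Type*} [CommSemiring R] (i : σ) (a : R)
    (F : MvPolynomial σ R) (k : ℕ) : (pderiv i)^[k] (C a * F) = C a * (pderiv i)^[k] F := by
  induction k with
  | zero => rfl
  | succ k ih => rw [Function.iterate_succ_apply', ih, pderiv_C_mul, Function.iterate_succ_apply']

theorem MvPolynomial.pderiv_iterate_mul_of_pderiv_eq_C {σ R : Type*} [CommRing R] {i : σ}
    {L : MvPolynomial σ R} {c : R} (hL : pderiv i L = C c) (Q : MvPolynomial σ R) (k : ℕ) :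
    (pderiv i)^[k] (L * Q) = L * (pderiv i)^[k] Q + C (c * k) * (pderiv i)^[k - 1] Q := by
  induction k with
  | zero => simp
  | succ k ih =>
    rw [Function.iterate_succ_apply', ih, map_add, pderiv_mul, hL, pderiv_C_mul,
      Function.iterate_succ_apply']
    rcases k with _ | k
    · simp [add_comm]
    · simp only [Nat.add_sub_cancel, ← Function.iterate_succ_apply' (pderiv i)]
      push_cast
      simp only [mul_add, mul_one, C_add, C_mul]
      ring

theorem MvPolynomial.natDegree_aeval_le_totalDegree {σ R : Type*} [CommSemiring R]
    {g : σ → Polynomial R} (hg : ∀ i, (g i).natDegree ≤ 1) (F : MvPolynomial σ R) :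
    (aeval g F).natDegree ≤ F.totalDegree := by
  conv_lhs => rw [F.as_sum, map_sum]
  refine Polynomial.natDegree_sum_le_of_forall_le _ _ fun s hs => ?_
  rw [aeval_monomial]
  refine Polynomial.natDegree_mul_le.trans ?_
  rw [Polynomial.algebraMap_eq, Polynomial.natDegree_C, zero_add]
  refine (Polynomial.natDegree_prod_le _ _).trans (le_trans ?_ (le_totalDegree hs))
  exact Finset.sum_le_sum fun i _ =>
    (Polynomial.natDegree_pow_le_of_le _ (hg i)).trans_eq (mul_one _)

theorem Polynomial.eq_zero_of_isRoot_iterate_derivative {K : Type*} [Field K] [CharZero K]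
    {f : Polynomial K} {a b : K} (hab : a ≠ b) {m : ℕ} (hf : f.natDegree < 2 * m)
    (ha : ∀ k < m, (derivative^[k] f).IsRoot a) (hb : ∀ k < m, (derivative^[k] f).IsRoot b) :
    f = 0 := by
  by_contra hf0
  have hdvd (c : K) (hc : ∀ k < m, (derivative^[k] f).IsRoot c) : (X - C c) ^ m ∣ f := by
    rw [← le_rootMultiplicity_iff hf0]
    rcases m with _ | m
    · exact Nat.zero_le _
    · exact lt_rootMultiplicity_of_isRoot_iterate_derivative_of_mem_nonZeroDivisors hf0
        (fun k hk => hc k (Nat.lt_succ_of_le hk))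
        (mem_nonZeroDivisors_of_ne_zero (Nat.cast_ne_zero.mpr (Nat.factorial_ne_zero _)))
  have := natDegree_le_of_dvd
    (((isCoprime_X_sub_C_of_isUnit_sub (sub_ne_zero.mpr hab).isUnit).pow).mul_dvd
      (hdvd a ha) (hdvd b hb)) hf0
  rw [natDegree_mul (pow_ne_zero _ (X_sub_C_ne_zero a)) (pow_ne_zero _ (X_sub_C_ne_zero b)),
    natDegree_pow, natDegree_pow, natDegree_X_sub_C, natDegree_X_sub_C] at this
  omega

theorem eq_zero_of_forall_mul_add_mul_eq_zero {K : Type*} [Field K] [CharZero K]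
    {A : ℕ → ℕ → K} {a b : K} {m : ℕ} (ha : a ≠ 0)
    (h : ∀ i j, i + j < m → a * i * A (i - 1) j + b * j * A i (j - 1) = 0) :
    ∀ i j, i + j + 1 < m → A i j = 0 := by
  intro i j
  induction j generalizing i with
  | zero =>
    intro hij
    simpa [ha, Nat.cast_add_one_ne_zero] using h (i + 1) 0 (by omega)
  | succ j ih =>
    intro hij
    simpa [ih (i + 1) (by omega), ha, Nat.cast_add_one_ne_zero] using
      h (i + 1) (j + 1) (by omega)

def VanishesToOrder (m : ℕ) (F : MvPolynomial (Fin 2) ℝ) (w : ℝ × ℝ) : Prop :=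
  ∀ i j : ℕ, i + j < m → pev ((pderiv 0)^[i] ((pderiv 1)^[j] F)) w = 0

noncomputable def dirDeriv (v : ℝ × ℝ) :
    Derivation ℝ (MvPolynomial (Fin 2) ℝ) (MvPolynomial (Fin 2) ℝ) :=
  v.1 • pderiv 0 + v.2 • pderiv 1

namespace VanishesToOrder

variable {m : ℕ} {F G : MvPolynomial (Fin 2) ℝ} {w : ℝ × ℝ}

theorem pev_eq_zero (h : VanishesToOrder m F w) (hm : 0 < m) : pev F w = 0 := h 0 0 hm

theorem add (hF : VanishesToOrder m F w) (hG : VanishesToOrder m G w) :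
    VanishesToOrder m (F + G) w := fun i j hij => by
  rw [iterate_map_add, iterate_map_add, pev, map_add, ← pev, ← pev, hF i j hij, hG i j hij,
    add_zero]

theorem C_mul (a : ℝ) (hF : VanishesToOrder m F w) : VanishesToOrder m (C a * F) w :=
  fun i j hij => by
  have hFij := hF i j hij
  rw [pev] at hFij ⊢
  rw [pderiv_iterate_C_mul, pderiv_iterate_C_mul, map_mul, hFij, mul_zero]

theorem pderiv (h : VanishesToOrder m F w) (k : Fin 2) :
    VanishesToOrder (m - 1) (MvPolynomial.pderiv k F) w := by
  intro i j hij
  fin_cases k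
  · have hcomm : (MvPolynomial.pderiv 1)^[j] (MvPolynomial.pderiv 0 F)
        = MvPolynomial.pderiv 0 ((MvPolynomial.pderiv 1)^[j] F) :=
      ((Function.Commute.iterate_right (fun F => pderiv_pderiv_comm 0 1 F) j).eq F).symm
    show pev ((MvPolynomial.pderiv 0)^[i]
      ((MvPolynomial.pderiv 1)^[j] (MvPolynomial.pderiv 0 F))) w = 0
    rw [hcomm, ← Function.iterate_succ_apply (MvPolynomial.pderiv 0)]
    exact h (i + 1) j (by omega)
  · exact h i (j + 1) (by omega)

theorem dirDeriv (h : VanishesToOrder m F w) (v : ℝ × ℝ) :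
    VanishesToOrder (m - 1) (_root_.dirDeriv v F) w := by
  rw [_root_.dirDeriv, Derivation.add_apply, Derivation.smul_apply, Derivation.smul_apply,
    smul_eq_C_mul, smul_eq_C_mul]
  exact ((h.pderiv 0).C_mul v.1).add ((h.pderiv 1).C_mul v.2)

theorem iterate_dirDeriv (h : VanishesToOrder m F w) (v : ℝ × ℝ) (k : ℕ) :
    VanishesToOrder (m - k) ((_root_.dirDeriv v)^[k] F) w := by
  induction k with
  | zero => exact h
  | succ k ih => rw [Function.iterate_succ_apply']; exact ih.dirDeriv v

end VanishesToOrder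

noncomputable def restrictLine (w v : ℝ × ℝ) :
    MvPolynomial (Fin 2) ℝ →ₐ[ℝ] Polynomial ℝ :=
  aeval ![Polynomial.C w.1 + Polynomial.C v.1 * Polynomial.X,
    Polynomial.C w.2 + Polynomial.C v.2 * Polynomial.X]

theorem natDegree_restrictLine_le (w v : ℝ × ℝ) (F : MvPolynomial (Fin 2) ℝ) :
    (restrictLine w v F).natDegree ≤ F.totalDegree :=
  natDegree_aeval_le_totalDegree (fun i => by fin_cases i <;> simp <;> compute_degree) F

theorem eval_restrictLine (w v : ℝ × ℝ) (F : MvPolynomial (Fin 2) ℝ) (t : ℝ) :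
    (restrictLine w v F).eval t = pev F (w + t • v) := by
  have h : (Polynomial.aeval t).comp (restrictLine w v)
      = aeval ![(w + t • v).1, (w + t • v).2] :=
    algHom_ext fun i => by fin_cases i <;> simp [restrictLine] <;> ring
  have := DFunLike.congr_fun h F
  rwa [AlgHom.comp_apply, Polynomial.coe_aeval_eq_eval, aeval_eq_eval] at this

theorem derivative_restrictLine (w v : ℝ × ℝ) (F : MvPolynomial (Fin 2) ℝ) :
    Polynomial.derivative (restrictLine w v F) = restrictLine w v (dirDeriv v F) := by
  induction F using MvPolynomial.induction_on with
  | C a => simp [restrictLine]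
  | add f g hf hg => simp only [map_add, hf, hg]
  | mul_X f i hf =>
    simp only [map_mul, Polynomial.derivative_mul, hf, Derivation.leibniz, dirDeriv]
    fin_cases i <;> simp [restrictLine, Polynomial.smul_eq_C_mul] <;> ring

theorem restrictLine_eq_zero {m : ℕ} {F : MvPolynomial (Fin 2) ℝ} {p q : ℝ × ℝ}
    (hdeg : F.totalDegree < 2 * m) (hp : VanishesToOrder m F p) (hq : VanishesToOrder m F q) :
    restrictLine q (p - q) F = 0 := by
  have hsemiconj : Function.Semiconj (restrictLine q (p - q)) (dirDeriv (p - q))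
      Polynomial.derivative := fun F => (derivative_restrictLine _ _ F).symm
  have hroot (t : ℝ) (ht : VanishesToOrder m F (q + t • (p - q))) (k : ℕ) (hk : k < m) :
      (Polynomial.derivative^[k] (restrictLine q (p - q) F)).IsRoot t := by
    rw [← (hsemiconj.iterate_right k).eq, Polynomial.IsRoot, eval_restrictLine]
    exact (ht.iterate_dirDeriv _ k).pev_eq_zero (by omega)
  refine Polynomial.eq_zero_of_isRoot_iterate_derivative zero_ne_one
    ((natDegree_restrictLine_le _ _ F).trans_lt hdeg) (hroot 0 ?_) (hroot 1 ?_)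
  · simpa using hq
  · simpa using hp

noncomputable def linePoly (w v : ℝ × ℝ) : MvPolynomial (Fin 2) ℝ :=
  C v.2 * (X 0 - C w.1) - C v.1 * (X 1 - C w.2)

theorem pev_linePoly_add_smul (w v : ℝ × ℝ) (t : ℝ) :
    pev (linePoly w v) (w + t • v) = 0 := by
  simp [linePoly, pev]
  ring

theorem pderiv_zero_linePoly (w v : ℝ × ℝ) : pderiv 0 (linePoly w v) = C v.2 := by
  simp [linePoly, pderiv_X]

theorem pderiv_one_linePoly (w v : ℝ × ℝ) : pderiv 1 (linePoly w v) = C (-v.1) := by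
  simp [linePoly, pderiv_X]

theorem linePoly_dvd_of_restrictLine_eq_zero {w v : ℝ × ℝ} (hv : v ≠ 0)
    {F : MvPolynomial (Fin 2) ℝ} (hF : restrictLine w v F = 0) : linePoly w v ∣ F := by
  have hN : v.1 ^ 2 + v.2 ^ 2 ≠ 0 := by
    contrapose! hv
    ext <;> simp only [Prod.fst_zero, Prod.snd_zero] <;> nlinarith [sq_nonneg v.1, sq_nonneg v.2]
  set π := Ideal.Quotient.mkₐ ℝ (Ideal.span {linePoly w v})
  -- `T` is the parameter of the orthogonal projection onto the line, so substituting it into the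
  -- restriction gives back the polynomial modulo `linePoly w v`.
  set T : MvPolynomial (Fin 2) ℝ :=
    C (v.1 ^ 2 + v.2 ^ 2)⁻¹ * (C v.1 * (X 0 - C w.1) + C v.2 * (X 1 - C w.2))
  have hsection : (π.comp (Polynomial.aeval T)).comp (restrictLine w v) = π := by
    refine algHom_ext fun i => ?_
    simp only [AlgHom.comp_apply, π, Ideal.Quotient.mkₐ_eq_mk, Ideal.Quotient.eq,
      Ideal.mem_span_singleton]
    fin_cases i
    · refine ⟨C (-v.2 / (v.1 ^ 2 + v.2 ^ 2)), MvPolynomial.funext fun x => ?_⟩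
      simp [restrictLine, linePoly, T]
      field_simp
      ring
    · refine ⟨C (v.1 / (v.1 ^ 2 + v.2 ^ 2)), MvPolynomial.funext fun x => ?_⟩
      simp [restrictLine, linePoly, T]
      field_simp
      ring
  rw [← Ideal.mem_span_singleton, ← Ideal.Quotient.eq_zero_iff_mem,
    ← Ideal.Quotient.mkₐ_eq_mk ℝ]
  change π F = 0
  rw [← hsection, AlgHom.comp_apply, hF, map_zero]

theorem linePoly_dvd {m : ℕ} {F : MvPolynomial (Fin 2) ℝ} {p q : ℝ × ℝ} (hpq : p ≠ q)
    (hdeg : F.totalDegree < 2 * m) (hp : VanishesToOrder m F p) (hq : VanishesToOrder m F q) :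
    linePoly q (p - q) ∣ F :=
  linePoly_dvd_of_restrictLine_eq_zero (sub_ne_zero.mpr hpq) (restrictLine_eq_zero hdeg hp hq)

theorem VanishesToOrder.of_linePoly_mul {m : ℕ} {w v x : ℝ × ℝ}
    {Q : MvPolynomial (Fin 2) ℝ} (hv : v ≠ 0) (hx : pev (linePoly w v) x = 0)
    (h : VanishesToOrder m (linePoly w v * Q) x) :
    VanishesToOrder (m - 1) Q x := by
  let A (i j : ℕ) : ℝ := pev ((MvPolynomial.pderiv 0)^[i] ((MvPolynomial.pderiv 1)^[j] Q)) x
  have hrel : ∀ i j, i + j < m → v.2 * i * A (i - 1) j + -v.1 * j * A i (j - 1) = 0 := by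
    intro i j hij
    have := h i j hij
    rw [pderiv_iterate_mul_of_pderiv_eq_C (pderiv_one_linePoly w v), iterate_map_add,
      pderiv_iterate_C_mul, pderiv_iterate_mul_of_pderiv_eq_C (pderiv_zero_linePoly w v)] at this
    simp only [pev, map_add, map_mul, eval_C] at this hx
    simp only [A, pev]
    rw [hx] at this
    linear_combination this
  intro i j hij
  rcases ne_or_eq v.2 0 with hv2 | hv2
  · exact eq_zero_of_forall_mul_add_mul_eq_zero hv2 hrel i j (by omega)
  · have hv1 : -v.1 ≠ 0 := neg_ne_zero.mpr fun hv1 => hv (Prod.ext hv1 hv2)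
    refine eq_zero_of_forall_mul_add_mul_eq_zero (A := fun i j => A j i) (b := v.2) (m := m) hv1
      (fun i j hij => ?_) j i (by omega)
    rw [add_comm]
    exact hrel j i (by omega)

theorem one_le_totalDegree_linePoly {w v : ℝ × ℝ} (hv : v ≠ 0) :
    1 ≤ (linePoly w v).totalDegree := by
  refine Nat.one_le_iff_ne_zero.mpr fun h0 => hv ?_
  rw [totalDegree_eq_zero_iff_eq_C] at h0
  have h0' := pderiv_zero_linePoly w v
  have h1' := pderiv_one_linePoly w v
  rw [h0, pderiv_C, eq_comm, C_eq_zero] at h0' h1'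
  exact Prod.ext (neg_eq_zero.mp h1') h0'

theorem le_totalDegree_linePoly_pow_mul {w v : ℝ × ℝ} (hv : v ≠ 0)
    {Q : MvPolynomial (Fin 2) ℝ} (hQ : Q ≠ 0) (k : ℕ) :
    k + Q.totalDegree ≤ (linePoly w v ^ k * Q).totalDegree := by
  have hL1 := one_le_totalDegree_linePoly (w := w) hv
  have hL : linePoly w v ≠ 0 := fun h => by simp [h] at hL1
  induction k with
  | zero => simp
  | succ k ih =>
    rw [pow_succ', mul_assoc, totalDegree_mul_of_isDomain hL (mul_ne_zero (pow_ne_zero _ hL) hQ)]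
    omega

theorem linePoly_pow_dvd {p q : ℝ × ℝ} (hpq : p ≠ q) {k m : ℕ}
    {F : MvPolynomial (Fin 2) ℝ} (hdeg : F.totalDegree + k ≤ 2 * m) (hp : VanishesToOrder m F p)
    (hq : VanishesToOrder m F q) : linePoly q (p - q) ^ k ∣ F := by
  induction k generalizing F m with
  | zero => simp
  | succ k ih =>
    obtain ⟨G, rfl⟩ := linePoly_dvd hpq (by omega) hp hq
    rcases eq_or_ne G 0 with rfl | hG
    · simp
    have hv : p - q ≠ 0 := sub_ne_zero.mpr hpq
    have hdegG := le_totalDegree_linePoly_pow_mul (w := q) hv hG 1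
    rw [pow_one] at hdegG
    rw [pow_succ']
    refine mul_dvd_mul_left _ (ih (m := m - 1) (by omega) ?_ ?_)
    · exact hp.of_linePoly_mul hv (by simpa using pev_linePoly_add_smul q (p - q) 1)
    · exact hq.of_linePoly_mul hv (by simpa using pev_linePoly_add_smul q (p - q) 0)

/-- a degree `D ≥ 5` curve with two distinct singular points of
multiplicity at least `D − 2` contains the line `L` through the two points with
multiplicity `D − 4`: `P = L^{D−4}·Q` with `Q` of total degree at most `4`. -/
theorem high_degree_curve_factorises
    (D : ℕ) (hD : 5 ≤ D)
    (P : MvPolynomial (Fin 2) ℝ) (hdeg : P.totalDegree = D)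
    (p q : ℝ × ℝ) (hpq : p ≠ q)
    (hp : ∀ i j : ℕ, i + j < D - 2 → pev ((pd 0)^[i] ((pd 1)^[j] P)) p = 0)
    (hq : ∀ i j : ℕ, i + j < D - 2 → pev ((pd 0)^[i] ((pd 1)^[j] P)) q = 0) :
    ∃ Q : MvPolynomial (Fin 2) ℝ,
      P = (C (p.2 - q.2) * (X 0 - C q.1) - C (p.1 - q.1) * (X 1 - C q.2)) ^ (D - 4) * Q ∧
        Q.totalDegree ≤ 4 := by
  obtain ⟨Q, rfl⟩ : linePoly q (p - q) ^ (D - 4) ∣ P :=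
    linePoly_pow_dvd hpq (m := D - 2) (by omega) hp hq
  refine ⟨Q, rfl, ?_⟩
  rcases eq_or_ne Q 0 with rfl | hQ
  · simp
  · have := le_totalDegree_linePoly_pow_mul (w := q) (sub_ne_zero.mpr hpq) hQ (D - 4)
    omega
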